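/- arXiv:0705.4676 — 7 statements merged into one kernel-verified Lean document; each statement's English description precedes it below -/
import Mathlib

section
/- There is no 3-wise trailing-zero independent hash family over n-grams (n ≥ 2) that is recursive. That is, if H is a family of hash functions h mapping n-grams over an alphabet Σ (|Σ| ≥ 2) to L-bit values such that there exists a function F with h(x₂,…,x_{n+1}) = F(h(x₁,…,x_n), x₁, x_{n+1}) for all symbols, then H cannot satisfy 3-wise trailing-zero independence. -/
/-!
Take two symbols `a ≠ b`. By the recursion, the hash of `a⋯ab` is the fixed function `F · a b`
of the hash of `a⋯a`. Hence the event "both hashes vanish" either coincides with "the hash of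
`a⋯a` vanishes" or is empty, so its probability is `2⁻ᴸ` or `0`. Three-wise independence, applied
to these two n-grams and `b⋯b`, forces it to be `2⁻²ᴸ`, which is neither when `L ≥ 1`.
-/

/-- Uniform probability of an event over a finite sample space. -/
noncomputable def prob (Ω : Type*) (p : Ω → Prop) : ℚ :=
  (Nat.card {ω : Ω // p ω} : ℚ) / (Nat.card Ω : ℚ)

section Prob

variable {Ω : Type*}

lemma prob_congr {p q : Ω → Prop} (h : ∀ ω, p ω ↔ q ω) : prob Ω p = prob Ω q := by
  simp only [prob, Nat.card_congr (Equiv.subtypeEquivRight h)]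

lemma prob_eq_zero_of_forall_not {p : Ω → Prop} (h : ∀ ω, ¬ p ω) : prob Ω p = 0 := by
  have : IsEmpty {ω // p ω} := ⟨fun ω => h ω.1 ω.2⟩
  simp [prob]

lemma prob_and_eq_or_eq_zero_of_eq_comp {α β : Type*} {X : Ω → α} {Y : Ω → β} {φ : α → β}
    (hY : ∀ ω, Y ω = φ (X ω)) (x : α) (y : β) :
    prob Ω (fun ω => X ω = x ∧ Y ω = y) = prob Ω (fun ω => X ω = x) ∨
      prob Ω (fun ω => X ω = x ∧ Y ω = y) = 0 := by
  by_cases hφ : φ x = y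
  · exact .inl <| prob_congr fun ω => ⟨And.left, fun hx => ⟨hx, by rw [hY, hx, hφ]⟩⟩
  · exact .inr <| prob_eq_zero_of_forall_not fun ω ⟨hx, hy⟩ => hφ (by rw [← hy, hY, hx])

end Prob

lemma Fin.dvd_val_iff_eq_zero {m : ℕ} [NeZero m] (v : Fin m) : m ∣ v.val ↔ v = 0 :=
  ⟨fun h => Fin.ext (Nat.eq_zero_of_dvd_of_lt h v.isLt), by rintro rfl; simp⟩

/-- `2 ^ j ∣ h` says that `h` has at least `j` trailing zero bits. -/
def IsThreewiseTrailingZeroIndependent {Ω α : Type*} {L : ℕ} (H : Ω → α → Fin (2 ^ L)) :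
    Prop :=
  ∀ g : Fin 3 → α, Function.Injective g → ∀ j : Fin 3 → ℕ, (∀ i, j i ≤ L) →
    prob Ω (fun ω => ∀ i, 2 ^ (j i) ∣ (H ω (g i)).val) = 1 / 2 ^ (j 0 + j 1 + j 2)

lemma injective_vec_three {α : Type*} {x y z : α} (hxy : x ≠ y) (hxz : x ≠ z) (hyz : y ≠ z) :
    Function.Injective ![x, y, z] := by
  simp only [Matrix.vecCons, Fin.cons_injective_iff]
  simp [hxy, hxz, hyz, Function.Injective, eq_iff_true_of_subsingleton]

namespace IsThreewiseTrailingZeroIndependent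

variable {Ω α : Type*} {L : ℕ} {H : Ω → α → Fin (2 ^ L)}

lemma prob_apply_eq_zero (hH : IsThreewiseTrailingZeroIndependent H)
    {x y z : α} (hxy : x ≠ y) (hxz : x ≠ z) (hyz : y ≠ z) :
    prob Ω (fun ω => H ω x = 0) = 1 / 2 ^ L := by
  have h := hH _ (injective_vec_three hxy hxz hyz) ![L, 0, 0] (by simp [Fin.forall_fin_succ])
  simpa [Fin.forall_fin_succ, Fin.dvd_val_iff_eq_zero] using h

lemma prob_apply_eq_zero_and_apply_eq_zero (hH : IsThreewiseTrailingZeroIndependent H)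
    {x y z : α} (hxy : x ≠ y) (hxz : x ≠ z) (hyz : y ≠ z) :
    prob Ω (fun ω => H ω x = 0 ∧ H ω y = 0) = 1 / 2 ^ (2 * L) := by
  have h := hH _ (injective_vec_three hxy hxz hyz) ![L, L, 0] (by simp [Fin.forall_fin_succ])
  simpa [Fin.forall_fin_succ, Fin.dvd_val_iff_eq_zero, two_mul] using h

theorem not_forall_eq_comp (hH : IsThreewiseTrailingZeroIndependent H) (hL : 1 ≤ L)
    {x y z : α} (hxy : x ≠ y) (hxz : x ≠ z) (hyz : y ≠ z) (φ : Fin (2 ^ L) → Fin (2 ^ L)) :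
    ¬ ∀ ω, H ω y = φ (H ω x) := by
  intro hy
  have hpair := hH.prob_apply_eq_zero_and_apply_eq_zero hxy hxz hyz
  rcases prob_and_eq_or_eq_zero_of_eq_comp hy 0 0 with h | h
  · rw [hpair, hH.prob_apply_eq_zero hxy hxz hyz] at h
    have : 2 * L = L := by simpa using h
    omega
  · rw [hpair] at h
    exact absurd h (by positivity)

end IsThreewiseTrailingZeroIndependent

theorem no_recursive_threewise_trailing_zero_independent_general
    {σ : Type*} [Fintype σ] (n L : ℕ) (hn : 2 ≤ n) (hσ : 2 ≤ Fintype.card σ)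
    (hL : 1 ≤ L) (Ω : Type*)
    (H : Ω → (Fin n → σ) → Fin (2 ^ L))
    (F : Fin (2 ^ L) → σ → σ → Fin (2 ^ L))
    (hrec : ∀ (ω : Ω) (x : Fin (n + 1) → σ),
      H ω (fun i => x i.succ) = F (H ω (fun i => x i.castSucc)) (x 0) (x (Fin.last n)))
    (hTZ : ∀ g : Fin 3 → (Fin n → σ), Function.Injective g →
      ∀ j : Fin 3 → ℕ, (∀ i, j i ≤ L) →
        prob Ω (fun ω => ∀ i, 2 ^ (j i) ∣ (H ω (g i)).val)
          = 1 / 2 ^ (j 0 + j 1 + j 2)) :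
    False := by
  obtain ⟨a, b, hab⟩ := Fintype.exists_pair_of_one_lt_card hσ
  obtain ⟨m, rfl⟩ : ∃ m, n = m + 2 := ⟨n - 2, by omega⟩
  let aa : Fin (m + 2) → σ := fun _ => a
  let ab : Fin (m + 2) → σ := Function.update aa (Fin.last (m + 1)) b
  have hshift : ∀ ω, H ω ab = F (H ω aa) a b := fun ω => by
    let x : Fin (m + 3) → σ := Function.update (fun _ => a) (Fin.last (m + 1)).succ b
    have htail : (fun i => x i.succ) = ab :=
      Function.update_comp_eq_of_injective _ (Fin.succ_injective _) _ _
    have hinit : (fun i => x i.castSucc) = aa :=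
      funext fun i => Function.update_of_ne (Fin.castSucc_ne_last i) _ _
    have hfirst : x 0 = a := Function.update_of_ne (Fin.succ_ne_zero _).symm _ _
    have hlast : x (Fin.last (m + 2)) = b := Function.update_self _ _ _
    rw [← htail, hrec, hinit, hfirst, hlast]
  refine IsThreewiseTrailingZeroIndependent.not_forall_eq_comp hTZ hL (z := fun _ => b)
    ?_ ?_ ?_ (F · a b) hshift
  · exact fun h => hab (by simpa [aa, ab] using congrFun h (Fin.last (m + 1)))
  · exact fun h => hab (congrFun h 0)
  · exact fun h => hab (by simpa [aa, ab] using congrFun h 0)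

/-- There is no 3-wise trailing-zero independent recursive hash family over n-grams. -/
theorem no_recursive_threewise_trailing_zero_independent
    {σ : Type*} [Fintype σ] (n L : ℕ) (hn : 2 ≤ n) (hσ : 2 ≤ Fintype.card σ)
    (hL : 1 ≤ L) (Ω : Type*) [Fintype Ω] [Nonempty Ω]
    (H : Ω → (Fin n → σ) → Fin (2 ^ L))
    (F : Fin (2 ^ L) → σ → σ → Fin (2 ^ L))
    (hrec : ∀ (ω : Ω) (x : Fin (n + 1) → σ),
      H ω (fun i => x i.succ) = F (H ω (fun i => x i.castSucc)) (x 0) (x (Fin.last n)))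
    (hTZ : ∀ g : Fin 3 → (Fin n → σ), Function.Injective g →
      ∀ j : Fin 3 → ℕ, (∀ i, j i ≤ L) →
        prob Ω (fun ω => ∀ i, 2 ^ (j i) ∣ (H ω (g i)).val)
          = 1 / 2 ^ (j 0 + j 1 + j 2)) :
    False :=
  no_recursive_threewise_trailing_zero_independent_general n L hn hσ hL Ω H F hrec hTZ
end

section
/- The family of hash functions h(x₁,…,x_n) = h₁(x₁) XOR h₂(x₂) XOR … XOR h_n(x_n), where h₁,…,h_n are independently chosen fully independent random functions from Σ to {0,1}^L, is 3-wise independent. -/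
open Classical in
/-- the indicator table: value `a` at position `(i, s)`, zero elsewhere. -/
noncomputable def xorAux {σ : Type*} (n L : ℕ) (i : Fin n) (s : σ) (a : Fin L → ZMod 2) :
    Fin n → σ → (Fin L → ZMod 2) :=
  fun i' s' => if i' = i ∧ s' = s then a else 0

open Classical in
lemma xorAux_sum {σ : Type*} [Fintype σ] (n L : ℕ) (i : Fin n) (s : σ) (a : Fin L → ZMod 2)
    (w : Fin n → σ) :
    (∑ i', xorAux n L i s a i' (w i')) = if w i = s then a else 0 := by
  rw [Finset.sum_eq_single i]
  · simp [xorAux]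
  · intro j _ hj
    simp [xorAux, hj]
  · simp

/-- The evaluation homomorphism. -/
noncomputable def xorT {σ : Type*} [Fintype σ] (n L : ℕ) (x y z : Fin n → σ) :
    (Fin n → σ → (Fin L → ZMod 2)) →+
      ((Fin L → ZMod 2) × (Fin L → ZMod 2) × (Fin L → ZMod 2)) where
  toFun ω := (∑ i, ω i (x i), ∑ i, ω i (y i), ∑ i, ω i (z i))
  map_zero' := by simp
  map_add' ω ω' := by
    simp [Prod.ext_iff, Finset.sum_add_distrib]

lemma xorT_surjective {σ : Type*} [Fintype σ] (n L : ℕ)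
    (x y z : Fin n → σ) (hxy : x ≠ y) (hxz : x ≠ z) (hyz : y ≠ z) :
    Function.Surjective (xorT n L x y z) := by
  classical
  rintro ⟨a, b, c⟩
  obtain ⟨i, hi⟩ := Function.ne_iff.mp hxy
  by_cases h1 : z i = x i
  · -- z i = x i ≠ y i
    obtain ⟨j, hj⟩ := Function.ne_iff.mp hxz
    refine ⟨xorAux n L j (x j) a + xorAux n L j (z j) c +
      xorAux n L i (y i)
        (b - (if y j = x j then a else 0) - (if y j = z j then c else 0)), ?_⟩
    have hzy : z i ≠ y i := h1 ▸ hi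
    simp only [xorT, AddMonoidHom.coe_mk, ZeroHom.coe_mk, Prod.mk.injEq, Pi.add_apply,
      Finset.sum_add_distrib, xorAux_sum]
    refine ⟨?_, ?_, ?_⟩
    · simp [hj, hi]
    · simp only [if_true]; abel
    · simp [hzy, Ne.symm hj]
  · by_cases h2 : z i = y i
    · -- z i = y i ≠ x i, z i ≠ x i
      obtain ⟨j, hj⟩ := Function.ne_iff.mp hyz
      refine ⟨xorAux n L i (x i)
          (a - (if x j = y j then b else 0) - (if x j = z j then c else 0)) +
        xorAux n L j (y j) b + xorAux n L j (z j) c, ?_⟩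
      simp only [xorT, AddMonoidHom.coe_mk, ZeroHom.coe_mk, Prod.mk.injEq, Pi.add_apply,
        Finset.sum_add_distrib, xorAux_sum]
      refine ⟨?_, ?_, ?_⟩
      · simp only [if_true]; abel
      · simp [hj, Ne.symm hi]
      · simp [h1, Ne.symm hj]
    · -- all three distinct at i
      refine ⟨xorAux n L i (x i) a + xorAux n L i (y i) b + xorAux n L i (z i) c, ?_⟩
      simp only [xorT, AddMonoidHom.coe_mk, ZeroHom.coe_mk, Prod.mk.injEq, Pi.add_apply,
        Finset.sum_add_distrib, xorAux_sum]
      refine ⟨?_, ?_, ?_⟩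
      · simp [hi, Ne.symm h1]
      · simp [Ne.symm hi, Ne.symm h2]
      · simp [h1, h2]

set_option maxHeartbeats 1000000 in
/-- The XOR-of-random-tables n-gram hash family is 3-wise independent.
Hash values are bit vectors modeled as `Fin L → ZMod 2`, with XOR = pointwise addition. -/
theorem xor_family_threewise_independent
    {σ : Type*} [Fintype σ] (n L : ℕ)
    (x y z : Fin n → σ) (hxy : x ≠ y) (hxz : x ≠ z) (hyz : y ≠ z)
    (vx vy vz : Fin L → ZMod 2) :
    prob (Fin n → σ → (Fin L → ZMod 2))
      (fun ω => (∑ i, ω i (x i)) = vx ∧ (∑ i, ω i (y i)) = vy ∧ (∑ i, ω i (z i)) = vz)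
      = 1 / 2 ^ (3 * L) := by
  classical
  have hsurj := xorT_surjective n L x y z hxy hxz hyz
  -- the event is the fiber of T over (vx, vy, vz)
  have hfiber : ∀ ω : Fin n → σ → (Fin L → ZMod 2),
      ((∑ i, ω i (x i)) = vx ∧ (∑ i, ω i (y i)) = vy ∧ (∑ i, ω i (z i)) = vz) ↔
        xorT n L x y z ω = (vx, vy, vz) := by
    intro ω
    simp [xorT, Prod.ext_iff, and_assoc]
  obtain ⟨ω₀, hω₀⟩ := hsurj (vx, vy, vz)
  -- fiber ≃ kernel
  have hcard_fiber : Nat.card {ω // xorT n L x y z ω = (vx, vy, vz)}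
      = Nat.card ((xorT n L x y z).ker) := by
    refine Nat.card_congr ⟨fun p => ⟨p.1 - ω₀, ?_⟩, fun k => ⟨k.1 + ω₀, ?_⟩, ?_, ?_⟩
    · rw [AddMonoidHom.mem_ker, map_sub, p.2, hω₀, sub_self]
    · have hk : xorT n L x y z k.1 = 0 := AddMonoidHom.mem_ker.mp k.2
      rw [map_add, hk, hω₀, zero_add]
    · intro p; simp
    · intro k; simp
  have hker : Nat.card (Fin n → σ → (Fin L → ZMod 2))
      = Nat.card ((Fin L → ZMod 2) × (Fin L → ZMod 2) × (Fin L → ZMod 2))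
        * Nat.card ((xorT n L x y z).ker) := by
    rw [AddSubgroup.card_eq_card_quotient_mul_card_addSubgroup (xorT n L x y z).ker]
    congr 1
    exact Nat.card_congr (QuotientAddGroup.quotientKerEquivOfSurjective _ hsurj).toEquiv
  have hcodom : Nat.card ((Fin L → ZMod 2) × (Fin L → ZMod 2) × (Fin L → ZMod 2))
      = 2 ^ (3 * L) := by
    simp [Nat.card_eq_fintype_card, Fintype.card_prod, Fintype.card_fun, ZMod.card]
    ring
  have hkerpos : 0 < Nat.card ((xorT n L x y z).ker) := Nat.card_pos
  have hK : (Nat.card ((xorT n L x y z).ker) : ℚ) ≠ 0 := by exact_mod_cast hkerpos.ne'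
  rw [prob, Nat.card_congr (Equiv.subtypeEquivRight hfiber), hcard_fiber, hker, hcodom]
  push_cast
  rw [mul_comm, ← div_div, div_self hK]
end

section
/- Randomized Integer-Division hashing h(x₁,…,x_n) = Σᵢ B^{n-i} h₁(xᵢ) mod 2^L is not uniform when n is even and B is odd: specifically, P(h(a,…,a) = 0) ≥ 2^{-(L-1)} > 2^{-L}. -/
theorem prob_comp_eval {σ M : Type*} [Finite σ] [Finite M] (p : M → Prop) (a : σ) :
    prob (σ → M) (fun h => p (h a)) = prob M p := by
  classical
  cases isEmpty_or_nonempty M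
  · have : IsEmpty (σ → M) := ⟨fun h => isEmptyElim (h a)⟩
    simp [prob]
  let e := Equiv.funSplitAt a M
  have hcard :
      Nat.card {h : σ → M // p (h a)} = Nat.card {y // p y} * Nat.card ({j // j ≠ a} → M) :=
    (Nat.card_congr ((e.subtypeEquiv fun _ => Iff.rfl).trans
      Equiv.prodSubtypeFstEquivSubtypeProd)).trans (Nat.card_prod _ _)
  have hpos : (Nat.card ({j // j ≠ a} → M) : ℚ) ≠ 0 :=
    Nat.cast_ne_zero.mpr Nat.card_pos.ne'
  rw [prob, prob, hcard, Nat.card_congr e, Nat.card_prod, Nat.cast_mul, Nat.cast_mul,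
    mul_div_mul_right _ _ hpos]

theorem Finset.even_sum_of_odd_of_even_card {ι : Type*} {s : Finset ι} {f : ι → ℕ}
    (hf : ∀ i ∈ s, Odd (f i)) (hs : Even s.card) : Even (∑ i ∈ s, f i) := by
  rwa [Finset.even_sum_iff_even_card_odd, Finset.filter_true_of_mem hf]

theorem ZMod.two_le_card_natCast_mul_eq_zero {N k : ℕ} [NeZero N] (hN : Even N) (hk : Even k) :
    2 ≤ Nat.card {y : ZMod N // (k : ZMod N) * y = 0} := by
  obtain ⟨m, rfl⟩ := hN
  obtain ⟨j, rfl⟩ := hk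
  have hm : (m : ZMod (m + m)) ≠ 0 := by
    rw [Ne, ZMod.natCast_eq_zero_iff]
    have : 0 < m := by have := NeZero.pos (m + m); omega
    exact fun h => absurd (Nat.le_of_dvd this h) (by omega)
  have hkm : ((j + j : ℕ) : ZMod (m + m)) * m = 0 := by
    rw [← Nat.cast_mul, ZMod.natCast_eq_zero_iff]
    exact ⟨j, by ring⟩
  have : Nontrivial {y : ZMod (m + m) // ((j + j : ℕ) : ZMod (m + m)) * y = 0} :=
    ⟨⟨⟨0, mul_zero _⟩, ⟨m, hkm⟩, fun h => hm (congrArg Subtype.val h).symm⟩⟩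
  exact Finite.one_lt_card

theorem integer_division_not_uniform_even_n_odd_B_general
    {σ : Type*} [Fintype σ] (n L B : ℕ) (hne : Even n)
    (hB : Odd B) (hL : 1 ≤ L) (a : σ) :
    (1 : ℚ) / 2 ^ (L - 1) ≤
      prob (σ → ZMod (2 ^ L))
        (fun h₁ => (∑ i : Fin n, (B : ZMod (2 ^ L)) ^ (n - 1 - (i : ℕ)) * h₁ a) = 0) ∧
    (1 : ℚ) / 2 ^ L <
      prob (σ → ZMod (2 ^ L))
        (fun h₁ => (∑ i : Fin n, (B : ZMod (2 ^ L)) ^ (n - 1 - (i : ℕ)) * h₁ a) = 0) := by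
  obtain ⟨l, rfl⟩ := Nat.exists_eq_add_of_le' hL
  set c := ∑ i : Fin n, B ^ (n - 1 - (i : ℕ))
  have hc : Even c := Finset.even_sum_of_odd_of_even_card (fun i _ => hB.pow) (by simpa using hne)
  have hprob : prob (σ → ZMod (2 ^ (l + 1)))
      (fun h₁ => (∑ i : Fin n, (B : ZMod (2 ^ (l + 1))) ^ (n - 1 - (i : ℕ)) * h₁ a) = 0) =
      Nat.card {y : ZMod (2 ^ (l + 1)) // (c : ZMod (2 ^ (l + 1))) * y = 0} / 2 ^ (l + 1) := by
    simp_rw [← Finset.sum_mul]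
    rw [prob_comp_eval (fun y => _ * y = 0), prob, Nat.card_zmod]
    push_cast [c]
    rfl
  have hcard :
      (2 : ℚ) ≤ Nat.card {y : ZMod (2 ^ (l + 1)) // (c : ZMod (2 ^ (l + 1))) * y = 0} :=
    mod_cast ZMod.two_le_card_natCast_mul_eq_zero (by simp [Nat.even_pow]) hc
  have hhalf : (1 : ℚ) / 2 ^ l = 2 / 2 ^ (l + 1) := by
    rw [pow_succ]; field_simp
  rw [hprob, Nat.add_sub_cancel, hhalf]
  constructor
  · gcongr
  · calc (1 : ℚ) / 2 ^ (l + 1) < 2 / 2 ^ (l + 1) := by gcongr; norm_num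
      _ ≤ _ := by gcongr

/-- Randomized Integer-Division hashing is not uniform for n even, B odd. -/
theorem integer_division_not_uniform_even_n_odd_B
    {σ : Type*} [Fintype σ] (n L B : ℕ) (hn : 0 < n) (hne : Even n)
    (hB : Odd B) (hL : 1 ≤ L) (a : σ) :
    (1 : ℚ) / 2 ^ (L - 1) ≤
      prob (σ → ZMod (2 ^ L))
        (fun h₁ => (∑ i : Fin n, (B : ZMod (2 ^ L)) ^ (n - 1 - (i : ℕ)) * h₁ a) = 0) ∧
    (1 : ℚ) / 2 ^ L <
      prob (σ → ZMod (2 ^ L))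
        (fun h₁ => (∑ i : Fin n, (B : ZMod (2 ^ L)) ^ (n - 1 - (i : ℕ)) * h₁ a) = 0) :=
  integer_division_not_uniform_even_n_odd_B_general n L B hne hB hL a
end

section
/- If B is odd and n is odd, then Randomized Integer-Division hashing h(x₁,…,x_n) = Σᵢ B^{n-i} h₁(xᵢ) mod 2^L is uniform: every n-gram hashes to every value in [0,2^L) with probability exactly 2^{-L}. -/
set_option maxHeartbeats 1000000

/-- Randomized Integer-Division hashing is uniform when B and n are both odd. -/
theorem integer_division_uniform_odd_B_odd_n
    {σ : Type*} [Fintype σ] (n L B : ℕ) (hB : Odd B) (hn : Odd n)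
    (x : Fin n → σ) (y : ZMod (2 ^ L)) :
    prob (σ → ZMod (2 ^ L))
      (fun h₁ => (∑ i : Fin n, (B : ZMod (2 ^ L)) ^ (n - 1 - (i : ℕ)) * h₁ (x i)) = y)
      = 1 / 2 ^ L := by
  classical
  haveI : NeZero (2 ^ L) := ⟨pow_ne_zero _ two_ne_zero⟩
  -- find a symbol s₀ whose fiber has odd cardinality
  have hcard : (Finset.univ : Finset (Fin n)).card
      = ∑ s : σ, (Finset.univ.filter (fun i => x i = s)).card :=
    Finset.card_eq_sum_card_fiberwise (fun i _ => Finset.mem_univ _)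
  have hex : ∃ s₀ : σ, Odd (Finset.univ.filter (fun i => x i = s₀)).card := by
    by_contra hc
    push_neg at hc
    simp only [Nat.not_odd_iff_even] at hc
    have : Even n := by
      have := Finset.even_sum (s := (Finset.univ : Finset σ))
        (fun s => (Finset.univ.filter (fun i => x i = s)).card) (fun s _ => hc s)
      rwa [← hcard, Finset.card_univ, Fintype.card_fin] at this
    exact (Nat.not_even_iff_odd.mpr hn) this
  obtain ⟨s₀, hs₀⟩ := hex
  set t : Finset (Fin n) := Finset.univ.filter (fun i => x i = s₀) with ht
  -- the coefficient of h₁ s₀ is odd, hence a unit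
  set N : ℕ := ∑ i ∈ t, B ^ (n - 1 - (i : ℕ)) with hN
  have hNodd : Odd N := by
    rw [Nat.odd_iff]
    have h1 : N % 2 = (∑ i ∈ t, B ^ (n - 1 - (i : ℕ)) % 2) % 2 := Finset.sum_nat_mod _ _ _
    have hB2 : ∀ i : Fin n, B ^ (n - 1 - (i : ℕ)) % 2 = 1 := fun i => Nat.odd_iff.mp hB.pow
    rw [h1]
    simp only [hB2]
    rw [Finset.sum_const, smul_eq_mul, mul_one]
    exact Nat.odd_iff.mp hs₀
  have hNunit : IsUnit ((N : ZMod (2 ^ L))) := by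
    rw [ZMod.isUnit_iff_coprime]
    exact (hNodd.coprime_two_right).pow_right _
  have hNcast : (N : ZMod (2 ^ L)) = ∑ i ∈ t, (B : ZMod (2 ^ L)) ^ (n - 1 - (i : ℕ)) := by
    rw [hN]; push_cast; rfl
  -- the hashing map as an additive group hom
  set φ : (σ → ZMod (2 ^ L)) →+ ZMod (2 ^ L) :=
    { toFun := fun h₁ => ∑ i : Fin n, (B : ZMod (2 ^ L)) ^ (n - 1 - (i : ℕ)) * h₁ (x i)
      map_zero' := by simp
      map_add' := by
        intro f g
        simp [mul_add, Finset.sum_add_distrib] } with hφ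
  -- φ is surjective
  have hsurj : Function.Surjective φ := by
    intro z
    refine ⟨fun s => if s = s₀ then (hNunit.unit⁻¹ : (ZMod (2 ^ L))ˣ) * z else 0, ?_⟩
    show (∑ i : Fin n, (B : ZMod (2 ^ L)) ^ (n - 1 - (i : ℕ)) *
      (if x i = s₀ then (hNunit.unit⁻¹ : (ZMod (2 ^ L))ˣ) * z else 0)) = z
    simp only [mul_ite, mul_zero]
    rw [← Finset.sum_filter, ← ht, ← Finset.sum_mul, ← hNcast, ← mul_assoc,
      hNunit.mul_val_inv, one_mul]
  -- counting
  have hker : Nat.card {h₁ : σ → ZMod (2 ^ L) //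
      (∑ i : Fin n, (B : ZMod (2 ^ L)) ^ (n - 1 - (i : ℕ)) * h₁ (x i)) = y}
      = Nat.card φ.ker := by
    obtain ⟨h₀, hh₀⟩ := hsurj y
    refine Nat.card_congr ⟨fun h => ⟨h.1 - h₀, ?_⟩, fun k => ⟨k.1 + h₀, ?_⟩, ?_, ?_⟩
    · have h2 : φ h.1 = y := h.2
      simp [AddMonoidHom.mem_ker, map_sub, h2, hh₀]
    · have h2 := k.2
      rw [AddMonoidHom.mem_ker] at h2
      show φ (k.1 + h₀) = y
      rw [map_add, h2, hh₀, zero_add]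
    · intro h; ext s; simp
    · intro k; ext s; simp
  have htotal : Nat.card (σ → ZMod (2 ^ L)) = 2 ^ L * Nat.card φ.ker := by
    rw [AddSubgroup.card_eq_card_quotient_mul_card_addSubgroup φ.ker,
      Nat.card_congr (QuotientAddGroup.quotientKerEquivOfSurjective φ hsurj).toEquiv,
      Nat.card_zmod]
  have hkpos : 0 < Nat.card φ.ker := Nat.card_pos
  unfold prob
  beta_reduce
  rw [hker, htotal]
  have hk' : (0 : ℚ) < (Nat.card φ.ker : ℚ) := by exact_mod_cast hkpos
  rw [Nat.cast_mul, Nat.cast_pow, Nat.cast_ofNat,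
    div_eq_div_iff (mul_pos (by positivity) hk').ne' (by positivity : (0:ℚ) < 2 ^ L).ne']
  ring
end

section
/- If B is even, then Randomized Integer-Division hashing h(x₁,…,x_n) = Σᵢ B^{n-i} h₁(xᵢ) mod 2^L is uniform for every n ≥ 1. -/
open Finset

theorem prob_apply_eq_of_surjective {G H : Type*} [AddGroup G] [AddGroup H] [Finite G]
    (f : G →+ H) (hf : Function.Surjective f) (y : H) :
    prob G (fun g => f g = y) = 1 / Nat.card H := by
  obtain ⟨g₀, rfl⟩ := hf y
  have hfiber : Nat.card {g // f g = f g₀} = Nat.card f.ker :=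
    Nat.card_congr <| (Equiv.subRight g₀).subtypeEquiv fun g => by
      simp [AddMonoidHom.mem_ker, sub_eq_zero]
  have hcard : Nat.card G = Nat.card H * Nat.card f.ker := by
    rw [f.ker.card_eq_card_quotient_mul_card_addSubgroup,
      Nat.card_congr (QuotientAddGroup.quotientKerEquivOfSurjective f hf).toEquiv]
  have hker : (Nat.card f.ker : ℚ) ≠ 0 := by exact_mod_cast Nat.card_pos.ne'
  rw [prob, hfiber, hcard, Nat.cast_mul, div_mul_cancel_right₀ hker, one_div]

theorem isNilpotent_natCast_of_even {L B : ℕ} (hB : Even B) : IsNilpotent (B : ZMod (2 ^ L)) := by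
  obtain ⟨k, rfl⟩ := hB
  refine ⟨L, ?_⟩
  have h2 : (2 : ZMod (2 ^ L)) ^ L = 0 := by exact_mod_cast ZMod.natCast_self (2 ^ L)
  rw [← two_mul, Nat.cast_mul, mul_pow, Nat.cast_ofNat, h2, zero_mul]

theorem isUnit_sum_pow_sub_of_isNilpotent {R : Type*} [CommRing R] {B : R} (hB : IsNilpotent B)
    {n : ℕ} {s : Finset (Fin n)} {j : Fin n} (hj : j ∈ s) (hjn : (j : ℕ) = n - 1) :
    IsUnit (∑ i ∈ s, B ^ (n - 1 - (i : ℕ))) := by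
  rw [← sum_erase_add _ _ hj, hjn, Nat.sub_self, pow_zero]
  refine IsNilpotent.isUnit_add_one (isNilpotent_sum fun i hi => hB.pow_of_pos ?_)
  have hij : (i : ℕ) ≠ j := fun h => (mem_erase.mp hi).1 (Fin.ext h)
  omega

section WeightedEval

variable {ι σ R : Type*} [Fintype ι] [Semiring R]

def weightedEval (a : ι → R) (x : ι → σ) : (σ → R) →+ R where
  toFun h := ∑ i, a i * h (x i)
  map_zero' := by simp
  map_add' h h' := by simp [mul_add, sum_add_distrib]

theorem weightedEval_single [DecidableEq σ] (a : ι → R) (x : ι → σ) (s : σ) (r : R) :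
    weightedEval a x (Pi.single s r) = (∑ i with x i = s, a i) * r := by
  simp only [weightedEval, AddMonoidHom.coe_mk, ZeroHom.coe_mk, sum_mul, sum_filter]
  refine sum_congr rfl fun i _ => ?_
  by_cases h : x i = s <;> simp [h]

theorem weightedEval_surjective [DecidableEq σ] (a : ι → R) (x : ι → σ) {s : σ}
    (hs : IsUnit (∑ i with x i = s, a i)) : Function.Surjective (weightedEval a x) := by
  intro r
  refine ⟨Pi.single s (hs.unit⁻¹ * r), ?_⟩
  rw [weightedEval_single, ← mul_assoc, hs.mul_val_inv, one_mul]

end WeightedEval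

/-- Randomized Integer-Division hashing is uniform when B is even, for every n ≥ 1. -/
theorem integer_division_uniform_even_B
    {σ : Type*} [Fintype σ] (n L B : ℕ) (hB : Even B) (hn : 1 ≤ n)
    (x : Fin n → σ) (y : ZMod (2 ^ L)) :
    prob (σ → ZMod (2 ^ L))
      (fun h₁ => (∑ i : Fin n, (B : ZMod (2 ^ L)) ^ (n - 1 - (i : ℕ)) * h₁ (x i)) = y)
      = 1 / 2 ^ L := by
  classical
  have : NeZero (2 ^ L) := ⟨by positivity⟩
  let last : Fin n := ⟨n - 1, by omega⟩
  have hunit : IsUnit (∑ i with x i = x last, (B : ZMod (2 ^ L)) ^ (n - 1 - (i : ℕ))) :=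
    isUnit_sum_pow_sub_of_isNilpotent (isNilpotent_natCast_of_even hB)
      (mem_filter.mpr ⟨mem_univ _, rfl⟩) rfl
  have huniform := prob_apply_eq_of_surjective _ (weightedEval_surjective _ x hunit) y
  rwa [Nat.card_zmod, Nat.cast_pow, Nat.cast_ofNat] at huniform
end

section
/- Hashing by an irreducible polynomial (General) is pairwise independent: let p(x) be irreducible of degree L ≥ n over GF(2), let h₁ : Σ → GF(2)[x]/p(x) be a uniformly random function, and define h(a₁,…,a_n) = Σ_{i=1}^{n} h₁(aᵢ) x^{n-i} in GF(2)[x]/p(x). Then for any two distinct n-grams a, a' and any values y, y', P(h(a)=y ∧ h(a')=y') = 2^{-2L}. -/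
open Polynomial

theorem prob_eq_one_div_card_of_surjective {M N : Type*} [AddGroup M] [AddGroup N] [Finite M]
    {f : M →+ N} (hf : Function.Surjective f) (y : N) :
    prob M (fun m => f m = y) = 1 / Nat.card N := by
  have hfiber : Nat.card {m // f m = y} = Nat.card f.ker :=
    Nat.card_congr (f.fiberEquivKerOfSurjective hf y)
  have hM : Nat.card M = Nat.card f.ker * Nat.card N := by
    rw [← f.ker.card_mul_index, AddSubgroup.index_ker,
      AddMonoidHom.range_eq_top_of_surjective f hf, AddSubgroup.card_top]
  have hker : (Nat.card f.ker : ℚ) ≠ 0 := by exact_mod_cast Nat.card_pos.ne'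
  rw [prob, hfiber, hM, Nat.cast_mul, div_mul_eq_div_div, div_self hker]

theorem LinearMap.prod_surjective_of_linearIndependent {K M : Type*} [Field K] [AddCommGroup M]
    [Module K M] {f g : M →ₗ[K] K} (hfg : LinearIndependent K ![f, g]) :
    Function.Surjective (f.prod g) := by
  rw [← LinearMap.range_eq_top]
  by_contra hrange
  obtain ⟨φ, hφ, hle⟩ := (f.prod g).range.exists_le_ker_of_lt_top (lt_top_iff_ne_top.2 hrange)
  have hcomb : φ (1, 0) • f + φ (0, 1) • g = 0 := by
    ext m
    have hexpand : φ (f m, g m) = f m * φ (1, 0) + g m * φ (0, 1) := by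
      rw [← smul_eq_mul, ← smul_eq_mul, ← map_smul, ← map_smul, ← map_add]
      simp
    simpa [mul_comm, hexpand] using hle ⟨m, rfl⟩
  obtain ⟨h₁, h₂⟩ := LinearIndependent.pair_iff.1 hfg _ _ hcomb
  exact hφ (by ext <;> simp [h₁, h₂])

section LinearIndependent

variable {R M ι σ : Type*} [Fintype ι] [Semiring R] [Nontrivial R] [AddCommMonoid M] [Module R M]
  {w : ι → M}

theorem LinearIndependent.sum_ne_zero [Nonempty ι] (hw : LinearIndependent R w) :
    ∑ i, w i ≠ 0 := by
  intro h
  have := Fintype.linearIndependent_iffₛ.1 hw 1 0 (by simpa using h) (Classical.arbitrary ι)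
  exact one_ne_zero this

theorem LinearIndependent.eq_of_sum_ite_eq [DecidableEq σ] (hw : LinearIndependent R w)
    {b b' : ι → σ}
    (h : ∀ s, (∑ i, if b i = s then w i else 0) = ∑ i, if b' i = s then w i else 0) :
    b = b' := by
  funext i
  have := Fintype.linearIndependent_iffₛ.1 hw (fun j => if b j = b i then 1 else 0)
    (fun j => if b' j = b i then 1 else 0) (by simpa [ite_smul] using h (b i)) i
  by_contra hne
  simp [Ne.symm hne] at this

end LinearIndependent

section WeightedHash

variable {R K σ ι : Type*} [Fintype ι]

def weightedHash [CommSemiring K] (w : ι → K) (b : ι → σ) : (σ → K) →ₗ[K] K where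
  toFun h := ∑ i, h (b i) * w i
  map_add' f g := by simp only [Pi.add_apply, add_mul, Finset.sum_add_distrib]
  map_smul' c f := by
    simp only [Pi.smul_apply, smul_eq_mul, mul_assoc, Finset.mul_sum, RingHom.id_apply]

@[simp]
theorem weightedHash_apply [CommSemiring K] (w : ι → K) (b : ι → σ) (h : σ → K) :
    weightedHash w b h = ∑ i, h (b i) * w i := rfl

theorem weightedHash_single [CommSemiring K] [DecidableEq σ] (w : ι → K) (b : ι → σ) (s : σ) :
    weightedHash w b (Pi.single s 1) = ∑ i, if b i = s then w i else 0 := by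
  simp [Pi.single_apply, ite_mul]

theorem weightedHash_one [CommSemiring K] (w : ι → K) (b : ι → σ) :
    weightedHash w b 1 = ∑ i, w i := by
  simp

variable [Field K] [Semiring R] [Nontrivial R] [Module R K] {w : ι → K}

theorem linearIndependent_weightedHash_pair (hw : LinearIndependent R w) {a a' : ι → σ}
    (hab : a ≠ a') : LinearIndependent K ![weightedHash w a, weightedHash w a'] := by
  classical
  obtain ⟨i₀, -⟩ := Function.ne_iff.1 hab
  have : Nonempty ι := ⟨i₀⟩
  rw [LinearIndependent.pair_iff]
  intro α β hαβ
  have hval (h : σ → K) : α * weightedHash w a h + β * weightedHash w a' h = 0 := by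
    simpa using LinearMap.congr_fun hαβ h
  have hβ : β = -α := by
    have hsum := hval 1
    rw [weightedHash_one, weightedHash_one, ← add_mul] at hsum
    linear_combination (mul_eq_zero.1 hsum).resolve_right hw.sum_ne_zero
  subst hβ
  have hα : α = 0 := by
    by_contra hα
    refine hab (hw.eq_of_sum_ite_eq fun s => ?_)
    have hs := hval (Pi.single s 1)
    rw [weightedHash_single, weightedHash_single, neg_mul, ← sub_eq_add_neg, ← mul_sub,
      mul_eq_zero] at hs
    exact sub_eq_zero.1 (hs.resolve_left hα)
  simp [hα]

theorem prob_weightedHash_pair [Finite K] [Finite σ] (hw : LinearIndependent R w) {a a' : ι → σ}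
    (hab : a ≠ a') (y y' : K) :
    prob (σ → K) (fun h => ∑ i, h (a i) * w i = y ∧ ∑ i, h (a' i) * w i = y') =
      1 / Nat.card K ^ 2 := by
  have hsurj := LinearMap.prod_surjective_of_linearIndependent
    (linearIndependent_weightedHash_pair hw hab)
  simpa [Prod.ext_iff, Nat.card_prod, sq] using
    prob_eq_one_div_card_of_surjective
      (f := ((weightedHash w a).prod (weightedHash w a')).toAddMonoidHom) hsurj (y, y')

end WeightedHash

namespace AdjoinRoot

variable {k : Type*} [Field k] {p : k[X]}

theorem linearIndependent_root_pow_of_le (hp : p ≠ 0) {m : ℕ} (hm : m ≤ p.natDegree) :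
    LinearIndependent k fun i : Fin m => root p ^ (i : ℕ) := by
  have := (powerBasis hp).basis.linearIndependent.comp (Fin.castLE hm) (Fin.castLE_injective hm)
  simp only [Function.comp_def, PowerBasis.basis_eq_pow, powerBasis_gen] at this
  exact this

theorem natCard_eq_pow_natDegree (hp : p ≠ 0) :
    Nat.card (AdjoinRoot p) = Nat.card k ^ p.natDegree := by
  rw [Nat.card_congr (powerBasis hp).basis.equivFun.toEquiv, Nat.card_fun, Nat.card_fin,
    powerBasis_dim]

end AdjoinRoot

/-- Hashing by an irreducible polynomial (General) is pairwise independent. -/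
theorem general_pairwise_independent
    {σ : Type*} [Fintype σ] (n L : ℕ) (hnL : n ≤ L)
    (p : Polynomial (ZMod 2)) (hp : Irreducible p) (hdeg : p.natDegree = L)
    (a a' : Fin n → σ) (haa : a ≠ a') (y y' : AdjoinRoot p) :
    prob (σ → AdjoinRoot p)
      (fun h₁ =>
        (∑ i : Fin n, h₁ (a i) * (AdjoinRoot.root p) ^ (n - 1 - (i : ℕ))) = y ∧
        (∑ i : Fin n, h₁ (a' i) * (AdjoinRoot.root p) ^ (n - 1 - (i : ℕ))) = y')
      = 1 / 2 ^ (2 * L) := by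
  have := Fact.mk hp
  have hw : LinearIndependent (ZMod 2) fun i : Fin n => AdjoinRoot.root p ^ (n - 1 - (i : ℕ)) := by
    have hrev : (fun i : Fin n => AdjoinRoot.root p ^ (n - 1 - (i : ℕ))) =
        (fun i : Fin n => AdjoinRoot.root p ^ (i : ℕ)) ∘ Fin.rev := by
      funext i
      simp only [Function.comp_apply, Fin.val_rev]
      congr 1
      omega
    rw [hrev]
    exact (AdjoinRoot.linearIndependent_root_pow_of_le hp.ne_zero (hdeg ▸ hnL)).comp
      Fin.rev Fin.rev_injective
  have hcard : Nat.card (AdjoinRoot p) = 2 ^ L := by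
    rw [AdjoinRoot.natCard_eq_pow_natDegree hp.ne_zero, hdeg, Nat.card_zmod]
  have : Finite (AdjoinRoot p) := Nat.finite_of_card_ne_zero (by simp [hcard])
  rw [prob_weightedHash_pair hw haa, hcard]
  push_cast
  ring
end

section
/- Cyclic hashing restricted to L−n+1 bits is uniform: let h₁ : Σ → GF(2)[x]/(x^L+1) be uniformly random, let q₁(x),…,q_n(x) be polynomials of degree < n, not all zero, and fix n−1 consecutive (mod L) coefficient positions. Then for any y, P(Σᵢ qᵢ(x) h₁(aᵢ) ≡ y on the remaining L−n+1 positions) = 2^{-(L-n+1)}, where a₁,…,a_n are distinct symbols. -/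
open Polynomial

namespace Polynomial

variable {R : Type*} [CommRing R] [Nontrivial R] {L : ℕ}

theorem monic_X_pow_sub_one (hL : 0 < L) : (X ^ L - 1 : R[X]).Monic :=
  monic_X_pow_sub (by rw [degree_one]; exact_mod_cast hL)

theorem degree_X_pow_sub_one (hL : 0 < L) : (X ^ L - 1 : R[X]).degree = L := by
  simpa using degree_X_pow_sub_C hL (1 : R)

theorem X_pow_modByMonic_X_pow_sub_one (hL : 0 < L) (a : ℕ) :
    (X ^ a : R[X]) %ₘ (X ^ L - 1) = X ^ (a % L) := by
  have hdvd : (X ^ L - 1 : R[X]) ∣ X ^ a - X ^ (a % L) := by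
    have h := (pow_one_sub_dvd_pow_mul_sub_one (X : R[X]) L (a / L)).mul_left (X ^ (a % L))
    rwa [mul_sub, mul_one, ← pow_add, Nat.mod_add_div] at h
  rw [modByMonic_eq_of_dvd_sub (monic_X_pow_sub_one hL) hdvd,
    (modByMonic_eq_self_iff (monic_X_pow_sub_one hL)).2]
  rw [degree_X_pow, degree_X_pow_sub_one hL]
  exact_mod_cast Nat.mod_lt a hL

end Polynomial

abbrev OutsideWindow (L n s : ℕ) : Type :=
  {k : Fin L // ∀ t < n - 1, (k : ℕ) ≠ (s + t) % L}

theorem card_outsideWindow {L n s : ℕ} (hn : 0 < n) (hnL : n ≤ L) :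
    Nat.card (OutsideWindow L n s) = L - n + 1 := by
  classical
  have hL : 0 < L := hn.trans_le hnL
  set window : Finset (Fin L) :=
    (Finset.range (n - 1)).image fun t => ⟨(s + t) % L, Nat.mod_lt _ hL⟩
  have hinj : Set.InjOn (fun t => (⟨(s + t) % L, Nat.mod_lt _ hL⟩ : Fin L))
      (Finset.range (n - 1)) := by
    intro t₁ ht₁ t₂ ht₂ h
    simp only [Finset.coe_range, Set.mem_Iio, Fin.mk.injEq] at ht₁ ht₂ h
    have h' : t₁ % L = t₂ % L := Nat.ModEq.add_left_cancel' s h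
    rwa [Nat.mod_eq_of_lt (by omega), Nat.mod_eq_of_lt (by omega)] at h'
  have hout (k : Fin L) : (∀ t < n - 1, (k : ℕ) ≠ (s + t) % L) ↔ k ∉ window := by
    simp [window, Fin.ext_iff, eq_comm]
  rw [Nat.card_eq_fintype_card, Fintype.card_subtype]
  simp_rw [hout]
  rw [Finset.filter_not, Finset.filter_mem_eq_inter, Finset.univ_inter, Finset.card_univ_sdiff,
    Finset.card_image_of_injOn hinj, Fintype.card_fin, Finset.card_range]
  omega

theorem coeff_X_pow_mul_modByMonic_outsideWindow {R : Type*} [CommRing R] [Nontrivial R]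
    {L n s : ℕ} (hL : 0 < L) {p : R[X]} (hp : p.degree < (n - 1 : ℕ))
    (k : OutsideWindow L n s) : ((X ^ s * p) %ₘ (X ^ L - 1)).coeff k = 0 := by
  rw [as_sum_support_C_mul_X_pow p, Finset.mul_sum, ← modByMonicHom_apply, map_sum,
    finsetSum_coeff]
  refine Finset.sum_eq_zero fun i hi => ?_
  have hi : i < n - 1 := by exact_mod_cast (le_degree_of_mem_supp i hi).trans_lt hp
  rw [mul_left_comm, ← pow_add, C_mul', map_smul, modByMonicHom_apply,
    X_pow_modByMonic_X_pow_sub_one hL, coeff_smul, coeff_X_pow, if_neg (k.2 i hi), smul_zero]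

section

variable {K σ : Type*} [Field K] {L n s : ℕ}

noncomputable def windowCoeffs (K : Type*) [Field K] (L n s : ℕ) :
    K[X] →ₗ[K] (OutsideWindow L n s → K) :=
  LinearMap.pi fun k => (lcoeff K k).comp (modByMonicHom (X ^ L - 1))

theorem windowCoeffs_apply (p : K[X]) (k : OutsideWindow L n s) :
    windowCoeffs K L n s p k = (p %ₘ (X ^ L - 1)).coeff k := rfl

theorem exists_mem_degreeLT_windowCoeffs_mul_eq (hL : 0 < L) {c : K[X]} (hc : c ≠ 0)
    (hcdeg : c.degree < n) (v : OutsideWindow L n s → K) :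
    ∃ w ∈ degreeLT K L, windowCoeffs K L n s (c * w) = v := by
  set f : K[X] := X ^ L - 1
  have hf : f.Monic := monic_X_pow_sub_one hL
  let T : K[X] := ∑ k : OutsideWindow L n s, monomial k (v k)
  have hT : T.degree < L := by
    refine mem_degreeLT.1 (Submodule.sum_mem _ fun k _ => mem_degreeLT.2 ?_)
    exact (degree_monomial_le _ _).trans_lt (by exact_mod_cast k.1.2)
  have hTv (k : OutsideWindow L n s) : T.coeff k = v k := by
    simp [T, finsetSum_coeff, coeff_monomial, Fin.val_inj, ← Subtype.ext_iff]
  -- `X ^ ((L - 1) * s)` inverts `X ^ s` modulo `f`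
  set T' : K[X] := X ^ ((L - 1) * s) * T
  have hT' : f ∣ X ^ s * T' - T := by
    have h := (pow_one_sub_dvd_pow_mul_sub_one (X : K[X]) L s).mul_right T
    have hs : s + (L - 1) * s = L * s := by
      rw [Nat.sub_one_mul]; have := Nat.le_mul_of_pos_left s hL; omega
    rwa [sub_mul, one_mul, ← hs, pow_add, mul_assoc] at h
  have hr : (T' % c).degree < (n - 1 : ℕ) := by
    refine (degree_mod_lt T' hc).trans_le (degree_le_of_natDegree_le ?_)
    have := (natDegree_lt_iff_degree_lt hc).2 hcdeg
    omega
  refine ⟨(X ^ s * (T' / c)) %ₘ f, mem_degreeLT.2 ?_, funext fun k => ?_⟩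
  · exact degree_X_pow_sub_one (R := K) hL ▸ degree_modByMonic_lt _ hf
  have hfold : (c * ((X ^ s * (T' / c)) %ₘ f)) %ₘ f = (T - X ^ s * (T' % c)) %ₘ f := by
    refine modByMonic_eq_of_dvd_sub hf <|
      (dvd_sub hT' (dvd_mul_right f (c * (X ^ s * (T' / c) /ₘ f)))).trans (dvd_of_eq ?_)
    linear_combination (-X ^ s : K[X]) * EuclideanDomain.div_add_mod T' c -
      c * modByMonic_add_div (X ^ s * (T' / c)) f
  rw [windowCoeffs_apply, hfold, ← modByMonicHom_apply, map_sub, modByMonicHom_apply,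
    modByMonicHom_apply, (modByMonic_eq_self_iff hf).2 (by rwa [degree_X_pow_sub_one hL]),
    coeff_sub, coeff_X_pow_mul_modByMonic_outsideWindow hL hr, sub_zero, hTv]

noncomputable def cyclicCombination (L : ℕ) (q : Fin n → K[X]) (a : Fin n → σ) :
    (σ → degreeLT K L) →ₗ[K] K[X] :=
  ∑ i, LinearMap.mulLeft K (q i) ∘ₗ (degreeLT K L).subtype ∘ₗ LinearMap.proj (a i)

theorem cyclicCombination_apply (q : Fin n → K[X]) (a : Fin n → σ) (h : σ → degreeLT K L) :
    cyclicCombination L q a h = ∑ i, q i * h (a i) := by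
  simp [cyclicCombination]

theorem windowCoeffs_comp_cyclicCombination_surjective (hL : 0 < L)
    {q : Fin n → K[X]} (hqdeg : ∀ i, (q i).degree < n) {i₀ : Fin n} (hi₀ : q i₀ ≠ 0)
    {a : Fin n → σ} (ha : Function.Injective a) :
    Function.Surjective (windowCoeffs K L n s ∘ₗ cyclicCombination L q a) := by
  classical
  intro v
  obtain ⟨w, hw, hwv⟩ := exists_mem_degreeLT_windowCoeffs_mul_eq hL hi₀ (hqdeg i₀) v
  refine ⟨Pi.single (a i₀) ⟨w, hw⟩, ?_⟩
  rw [LinearMap.comp_apply, cyclicCombination_apply, Finset.sum_eq_single i₀, Pi.single_eq_same]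
  · exact hwv
  · intro i _ hi
    rw [Pi.single_eq_of_ne (ha.ne hi), ZeroMemClass.coe_zero, mul_zero]
  · exact fun h => (h (Finset.mem_univ i₀)).elim

end

theorem AddMonoidHom.card_preimage_singleton_mul_card {G H : Type*} [AddGroup G] [AddGroup H]
    {f : G →+ H} (hf : Function.Surjective f) (h : H) :
    Nat.card (f ⁻¹' {h}) * Nat.card H = Nat.card G := by
  rw [Nat.card_congr (f.fiberEquivKerOfSurjective hf h), ← f.ker.card_mul_index,
    AddSubgroup.index_ker, f.range_eq_top.2 hf, AddSubgroup.card_top]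

theorem AddMonoidHom.card_preimage_singleton_div_card {G H : Type*} [AddGroup G] [AddGroup H]
    [Finite G] {f : G →+ H} (hf : Function.Surjective f) (h : H) :
    (Nat.card (f ⁻¹' {h}) : ℚ) / Nat.card G = 1 / Nat.card H := by
  obtain ⟨g, hg⟩ := hf h
  have hfiber : Nat.card (f ⁻¹' {h}) ≠ 0 := Nat.card_ne_zero.2 ⟨⟨⟨g, hg⟩⟩, inferInstance⟩
  rw [← card_preimage_singleton_mul_card hf h]
  push_cast
  field_simp

/-- Uniformity of Cyclic hashing after discarding n−1 consecutive (mod L) bits: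
a not-all-zero combination ∑ qᵢ(x)·h₁(aᵢ) of independent uniform ring elements,
with deg qᵢ < n, agrees with y outside the discarded window with probability
2^(-(L-n+1)). -/
theorem cyclic_combination_outside_window_uniform
    {σ : Type*} [Fintype σ] (n L s : ℕ) (hnL : n ≤ L)
    (q : Fin n → Polynomial (ZMod 2)) (hqdeg : ∀ i, (q i).degree < (n : WithBot ℕ))
    (hq : ∃ i, q i ≠ 0) (a : Fin n → σ) (ha : Function.Injective a)
    (y : Polynomial (ZMod 2)) :
    prob (σ → {w : Polynomial (ZMod 2) // w.degree < (L : WithBot ℕ)})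
      (fun h₁ => ∀ k < L, (∀ t < n - 1, k ≠ (s + t) % L) →
        ((∑ i : Fin n, q i * (h₁ (a i)).val) %ₘ ((X : Polynomial (ZMod 2)) ^ L + 1)).coeff k
          = y.coeff k)
      = 1 / 2 ^ (L - n + 1) := by
  obtain ⟨i₀, hi₀⟩ := hq
  have hn : 0 < n := i₀.pos
  set Φ := windowCoeffs (ZMod 2) L n s ∘ₗ cyclicCombination L q a
  have hΦ : Function.Surjective Φ :=
    windowCoeffs_comp_cyclicCombination_surjective (hn.trans_le hnL) hqdeg hi₀ ha
  have : Finite (degreeLT (ZMod 2) L) := Module.finite_of_finite (ZMod 2)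
  let e : (σ → {w : Polynomial (ZMod 2) // w.degree < (L : WithBot ℕ)}) ≃
      (σ → degreeLT (ZMod 2) L) :=
    .piCongrRight fun _ => .subtypeEquivRight fun _ => mem_degreeLT.symm
  set t₀ : OutsideWindow L n s → ZMod 2 := fun k => y.coeff k
  rw [prob, Nat.card_congr e,
    Nat.card_congr (e.subtypeEquiv (q := (· ∈ Φ.toAddMonoidHom ⁻¹' {t₀})) fun h₁ => ?_),
    Φ.toAddMonoidHom.card_preimage_singleton_div_card hΦ, Nat.card_fun,
    card_outsideWindow hn hnL, Nat.card_zmod]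
  · norm_cast
  simp only [Set.mem_preimage, Set.mem_singleton_iff, funext_iff, LinearMap.toAddMonoidHom_coe,
    Φ, LinearMap.comp_apply, cyclicCombination_apply, windowCoeffs_apply, t₀,
    ← CharTwo.sub_eq_add]
  exact ⟨fun h k => h k k.1.2 k.2, fun h k hk hout => h ⟨⟨k, hk⟩, hout⟩⟩
end
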